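/- Let K be an algebraically closed field which is complete with respect to a nontrivial non-archimedean absolute value |·|. For a nontrivial element γ of finite order in PGL(2,K), choose a representative matrix A = (a b; c d) ∈ GL(2,K) of γ which has finite order in GL(2,K) (such a representative exists, and the set below is independent of the choice), and define the isometric circle Ī_γ = {z ∈ K : |cz + d| ≤ 1}. Let G and H be finite subgroups of PGL(2,K) such that Ī_γ ∩ Ī_δ = ∅ for all γ ∈ G \ {1} and δ ∈ H \ {1}. Then the canonical homomorphism from the free product G * H to PGL(2,K) (restricting to the inclusions on G and on H) is injective, and its image is a discrete subgroup of PGL(2,K). -/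
import Mathlib


/-- `PGL(2,K)`: the quotient of `GL(2,K)` by its center, with the quotient topology coming
from the matrix topology on `GL(2,K)`. -/
abbrev ProjectiveGL2 (K : Type*) [Field K] : Type _ :=
  GL (Fin 2) K ⧸ Subgroup.center (GL (Fin 2) K)

namespace Herrlich

open Matrix Polynomial

variable {K : Type*} [NontriviallyNormedField K]

/-- The "denominator" of the Möbius transformation attached to a matrix. -/
def den (M : Matrix (Fin 2) (Fin 2) K) (z : K) : K := M 1 0 * z + M 1 1

/-- The Möbius transformation attached to a matrix. -/
noncomputable def moeb (M : Matrix (Fin 2) (Fin 2) K) (z : K) : K :=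
  (M 0 0 * z + M 0 1) / den M z

theorem den_def (M : Matrix (Fin 2) (Fin 2) K) (z : K) : den M z = M 1 0 * z + M 1 1 := rfl

theorem den_mul (M N : Matrix (Fin 2) (Fin 2) K) (z : K) (h : den N z ≠ 0) :
    den (M * N) z = den M (moeb N z) * den N z := by
  simp only [den, moeb, Matrix.mul_apply, Fin.sum_univ_two, den] at *
  field_simp
  ring

theorem moeb_mul (M N : Matrix (Fin 2) (Fin 2) K) (z : K) (h : den N z ≠ 0) :
    moeb (M * N) z = moeb M (moeb N z) := by
  have hd := den_mul M N z h
  have hnum : (M * N) 0 0 * z + (M * N) 0 1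
      = (M 0 0 * moeb N z + M 0 1) * den N z := by
    simp only [moeb, den, Matrix.mul_apply, Fin.sum_univ_two] at *
    field_simp
    ring
  rw [moeb, hd, hnum, mul_div_mul_right _ _ h]
  rfl

theorem den_smul (lam : K) (M : Matrix (Fin 2) (Fin 2) K) (z : K) :
    den (lam • M) z = lam * den M z := by
  simp only [den, Matrix.smul_apply, smul_eq_mul]; ring

theorem moeb_smul (lam : K) (hlam : lam ≠ 0) (M : Matrix (Fin 2) (Fin 2) K) (z : K) :
    moeb (lam • M) z = moeb M z := by
  simp only [moeb, den_smul, Matrix.smul_apply, smul_eq_mul]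
  rw [show lam * (M 0 0) * z + lam * M 0 1 = lam * (M 0 0 * z + M 0 1) by ring]
  rw [mul_div_mul_left _ _ hlam]

theorem moeb_scalar (r : K) (hr : r ≠ 0) (z : K) :
    moeb (r • (1 : Matrix (Fin 2) (Fin 2) K)) z = z := by
  have h00 : (r • (1 : Matrix (Fin 2) (Fin 2) K)) 0 0 = r := by
    simp [Matrix.smul_apply, Matrix.one_apply]
  have h01 : (r • (1 : Matrix (Fin 2) (Fin 2) K)) 0 1 = 0 := by
    simp [Matrix.smul_apply, Matrix.one_apply_ne (by decide : (0 : Fin 2) ≠ 1)]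
  have h10 : (r • (1 : Matrix (Fin 2) (Fin 2) K)) 1 0 = 0 := by
    simp [Matrix.smul_apply, Matrix.one_apply_ne (by decide : (1 : Fin 2) ≠ 0)]
  have h11 : (r • (1 : Matrix (Fin 2) (Fin 2) K)) 1 1 = r := by
    simp [Matrix.smul_apply, Matrix.one_apply]
  rw [moeb, den, h00, h01, h10, h11, zero_mul, zero_add, add_zero, mul_comm,
    mul_div_assoc, div_self hr, mul_one]

/-- Any root of the characteristic polynomial of a finite-order element of `GL(2,K)`
has norm one. -/
theorem root_norm_one (A : GL (Fin 2) K) (hA : IsOfFinOrder A) (ζ : K)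
    (hroot : ζ * ζ - ((A : Matrix (Fin 2) (Fin 2) K) 0 0 + (A : Matrix (Fin 2) (Fin 2) K) 1 1) * ζ
      + ((A : Matrix (Fin 2) (Fin 2) K) 0 0 * (A : Matrix (Fin 2) (Fin 2) K) 1 1
         - (A : Matrix (Fin 2) (Fin 2) K) 0 1 * (A : Matrix (Fin 2) (Fin 2) K) 1 0) = 0) :
    ‖ζ‖ = 1 := by
  obtain ⟨n, hn, hAn⟩ := isOfFinOrder_iff_pow_eq_one.mp hA
  set M : Matrix (Fin 2) (Fin 2) K := (A : Matrix (Fin 2) (Fin 2) K) with hM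
  have e00 : (M - ζ • 1) 0 0 = M 0 0 - ζ := by
    simp [Matrix.sub_apply, Matrix.one_apply]
  have e11 : (M - ζ • 1) 1 1 = M 1 1 - ζ := by
    simp [Matrix.sub_apply, Matrix.one_apply]
  have e01 : (M - ζ • 1) 0 1 = M 0 1 := by
    simp [Matrix.sub_apply, Matrix.one_apply_ne (by decide : (0 : Fin 2) ≠ 1)]
  have e10 : (M - ζ • 1) 1 0 = M 1 0 := by
    simp [Matrix.sub_apply, Matrix.one_apply_ne (by decide : (1 : Fin 2) ≠ 0)]
  have hdet : (M - ζ • 1).det = 0 := by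
    rw [Matrix.det_fin_two, e00, e11, e01, e10]
    linear_combination hroot
  obtain ⟨v, hv0, hv⟩ := (Matrix.exists_mulVec_eq_zero_iff).mpr hdet
  have hMv : M.mulVec v = ζ • v := by
    rw [Matrix.sub_mulVec, Matrix.smul_mulVec, Matrix.one_mulVec, sub_eq_zero] at hv
    exact hv
  have hpow : ∀ k : ℕ, (M ^ k).mulVec v = ζ ^ k • v := by
    intro k
    induction k with
    | zero => simp
    | succ k ih =>
        rw [pow_succ, ← Matrix.mulVec_mulVec, hMv, Matrix.mulVec_smul, ih, smul_smul, pow_succ]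
        rw [mul_comm]
  have hMn : M ^ n = 1 := by
    have : ((A ^ n : GL (Fin 2) K) : Matrix (Fin 2) (Fin 2) K) = 1 := by rw [hAn]; rfl
    rwa [Units.val_pow_eq_pow_val] at this
  have hvζ : ζ ^ n • v = v := by
    rw [← hpow n, hMn, Matrix.one_mulVec]
  obtain ⟨i, hi⟩ := Function.ne_iff.mp hv0
  have hζn : ζ ^ n = 1 := by
    have h1 := congrFun hvζ i
    simp only [Pi.smul_apply, smul_eq_mul, Pi.zero_apply] at h1 hi
    have h2 : (ζ ^ n - 1) * v i = 0 := by linear_combination h1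
    rcases mul_eq_zero.mp h2 with h | h
    · exact sub_eq_zero.mp h
    · exact absurd h hi
  have hnorm : ‖ζ‖ ^ n = 1 := by
    rw [← norm_pow, hζn, norm_one]
  rcases lt_trichotomy ‖ζ‖ 1 with h | h | h
  · exact absurd hnorm (by have := pow_lt_one₀ (norm_nonneg ζ) h hn.ne'; linarith)
  · exact h
  · exact absurd hnorm (by have := one_lt_pow₀ h hn.ne'; linarith)

/-- If a finite-order element of `GL(2,K)` has lower-left entry zero, then its lower-right
entry has norm one. -/
theorem c_zero_case (A : GL (Fin 2) K) (hA : IsOfFinOrder A)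
    (hc : (A : Matrix (Fin 2) (Fin 2) K) 1 0 = 0) :
    ‖(A : Matrix (Fin 2) (Fin 2) K) 1 1‖ = 1 := by
  apply root_norm_one A hA
  rw [hc]
  ring

variable [IsAlgClosed K]

/-- A finite-order element of `GL(2,K)` has determinant of norm one and trace of norm
at most one. -/
theorem finOrder_norms (hna : IsNonarchimedean (fun x : K => ‖x‖)) (A : GL (Fin 2) K)
    (hA : IsOfFinOrder A) :
    ‖(A : Matrix (Fin 2) (Fin 2) K) 0 0 * (A : Matrix (Fin 2) (Fin 2) K) 1 1
      - (A : Matrix (Fin 2) (Fin 2) K) 0 1 * (A : Matrix (Fin 2) (Fin 2) K) 1 0‖ = 1 ∧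
    ‖(A : Matrix (Fin 2) (Fin 2) K) 0 0 + (A : Matrix (Fin 2) (Fin 2) K) 1 1‖ ≤ 1 := by
  set M : Matrix (Fin 2) (Fin 2) K := (A : Matrix (Fin 2) (Fin 2) K) with hM
  set t : K := M 0 0 + M 1 1 with ht
  set dd : K := M 0 0 * M 1 1 - M 0 1 * M 1 0 with hdd
  have hdet : dd ≠ 0 := by
    have : IsUnit M.det := (Matrix.isUnit_iff_isUnit_det M).mp A.isUnit
    rw [Matrix.det_fin_two] at this
    exact this.ne_zero
  obtain ⟨ζ, hζ⟩ : ∃ ζ : K, ζ * ζ - t * ζ + dd = 0 := by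
    obtain ⟨z, hz⟩ := IsAlgClosed.exists_root (X ^ 2 - C t * X + C dd) (by
      have h2 : (X ^ 2 - C t * X + C dd : K[X]).degree = 2 := by compute_degree!
      rw [h2]; norm_num)
    refine ⟨z, ?_⟩
    have h3 := hz
    simp only [IsRoot, eval_add, eval_sub, eval_pow, eval_mul, eval_C, eval_X] at h3
    linear_combination h3
  have hζ0 : ζ ≠ 0 := by
    rintro rfl
    simp at hζ
    exact hdet hζ
  set ζ' : K := t - ζ with hζ'
  have hζ'root : ζ' * ζ' - t * ζ' + dd = 0 := by rw [hζ']; linear_combination hζ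
  have hprod : ζ * ζ' = dd := by rw [hζ']; linear_combination -hζ
  have hζ'0 : ζ' ≠ 0 := by
    intro h
    rw [h, mul_zero] at hprod
    exact hdet hprod.symm
  have h1 : ‖ζ‖ = 1 := root_norm_one A hA ζ (by linear_combination hζ)
  have h1' : ‖ζ'‖ = 1 := root_norm_one A hA ζ' (by linear_combination hζ'root)
  constructor
  · rw [← hprod, norm_mul, h1, h1', one_mul]
  · have h4 : t = ζ + ζ' := by rw [hζ']; ring
    rw [h4]
    calc ‖ζ + ζ'‖ ≤ max ‖ζ‖ ‖ζ'‖ := hna ζ ζ'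
    _ ≤ 1 := by rw [h1, h1']; norm_num

/-- The key mapping property: a finite-order Möbius transformation maps the complement of its
isometric circle into its isometric circle. -/
theorem map_into (hna : IsNonarchimedean (fun x : K => ‖x‖)) (A : GL (Fin 2) K)
    (hA : IsOfFinOrder A) (z : K)
    (hz : 1 < ‖den ((A : Matrix (Fin 2) (Fin 2) K)) z‖) :
    ‖den ((A : Matrix (Fin 2) (Fin 2) K)) (moeb ((A : Matrix (Fin 2) (Fin 2) K)) z)‖ ≤ 1 := by
  obtain ⟨hdet, htr⟩ := finOrder_norms hna A hA
  set M : Matrix (Fin 2) (Fin 2) K := (A : Matrix (Fin 2) (Fin 2) K) with hM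
  set e : K := den M z with he
  have he0 : e ≠ 0 := by
    intro h; rw [h] at hz; simp at hz; linarith
  have key : den M (moeb M z) = (M 0 0 + M 1 1) +
      (-(M 0 0 * M 1 1 - M 0 1 * M 1 0)) / e := by
    simp only [den, moeb, he] at *
    field_simp
    ring
  rw [key]
  calc ‖(M 0 0 + M 1 1) + (-(M 0 0 * M 1 1 - M 0 1 * M 1 0)) / e‖
      ≤ max ‖M 0 0 + M 1 1‖ ‖(-(M 0 0 * M 1 1 - M 0 1 * M 1 0)) / e‖ := hna _ _
    _ ≤ 1 := by
        apply max_le htr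
        rw [norm_div, norm_neg, hdet]
        rw [div_le_one (by linarith)]
        linarith

/-- The center of `GL(2,K)` consists exactly of the nonzero scalar matrices. -/
theorem mem_center_GL2 (A : GL (Fin 2) K) :
    A ∈ Subgroup.center (GL (Fin 2) K) ↔
      ∃ r : K, r ≠ 0 ∧ (A : Matrix (Fin 2) (Fin 2) K) = r • 1 := by
  constructor
  · intro h
    obtain ⟨r, hr⟩ : ∃ r : K, Matrix.scalar (Fin 2) r = (A : Matrix (Fin 2) (Fin 2) K) := by
      apply Matrix.mem_range_scalar_of_commute_transvectionStruct
      intro t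
      have ht : IsUnit t.toMatrix := by simp [Matrix.isUnit_iff_isUnit_det]
      have h2 := (Subgroup.mem_center_iff.mp h) ht.unit
      have h3 := congrArg Units.val h2
      simpa [Commute, SemiconjBy] using h3
    have hsc : Matrix.scalar (Fin 2) r = r • (1 : Matrix (Fin 2) (Fin 2) K) := by
      rw [Matrix.smul_one_eq_diagonal]; rfl
    refine ⟨r, ?_, by rw [← hr, hsc]⟩
    intro hr0
    have : IsUnit (A : Matrix (Fin 2) (Fin 2) K).det :=
      (Matrix.isUnit_iff_isUnit_det _).mp A.isUnit
    rw [← hr, hsc, hr0] at this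
    simp at this
  · rintro ⟨r, hr0, hr⟩
    rw [Subgroup.mem_center_iff]
    intro B
    ext
    simp [Units.val_mul, hr, mul_smul_comm, smul_mul_assoc]

/-- Every finite-order element of `PGL(2,K)` admits a finite-order representative
in `GL(2,K)`. -/
theorem exists_finOrder_rep (x : GL (Fin 2) K ⧸ Subgroup.center (GL (Fin 2) K))
    (hx : IsOfFinOrder x) :
    ∃ A : GL (Fin 2) K, IsOfFinOrder A ∧
      (QuotientGroup.mk A : GL (Fin 2) K ⧸ Subgroup.center (GL (Fin 2) K)) = x := by
  obtain ⟨A0, rfl⟩ := QuotientGroup.mk_surjective x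
  obtain ⟨n, hn, hxn⟩ := isOfFinOrder_iff_pow_eq_one.mp hx
  have hcen : A0 ^ n ∈ Subgroup.center (GL (Fin 2) K) := by
    rw [← QuotientGroup.eq_one_iff, ← hxn]; rfl
  obtain ⟨lam, hlam0, hlam⟩ := (mem_center_GL2 (A0 ^ n)).mp hcen
  obtain ⟨μ, hμ⟩ := IsAlgClosed.exists_pow_nat_eq lam⁻¹ hn
  have hμ0 : μ ≠ 0 := by
    intro h
    rw [h, zero_pow hn.ne'] at hμ
    exact inv_ne_zero hlam0 hμ.symm
  have hu1 : (μ • 1 : Matrix (Fin 2) (Fin 2) K) * (μ⁻¹ • 1) = 1 := by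
    rw [smul_mul_assoc, one_mul, smul_smul, mul_inv_cancel₀ hμ0, one_smul]
  have hu2 : (μ⁻¹ • 1 : Matrix (Fin 2) (Fin 2) K) * (μ • 1) = 1 := by
    rw [smul_mul_assoc, one_mul, smul_smul, inv_mul_cancel₀ hμ0, one_smul]
  set u : GL (Fin 2) K := ⟨μ • 1, μ⁻¹ • 1, hu1, hu2⟩ with hu
  have hcomm : Commute u A0 := by
    apply Units.ext
    show (μ • (1:Matrix (Fin 2) (Fin 2) K)) * A0 = (A0 : Matrix (Fin 2) (Fin 2) K) * (μ • 1)
    rw [smul_mul_assoc, one_mul, mul_smul_comm, mul_one]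
  refine ⟨u * A0, ?_, ?_⟩
  · rw [isOfFinOrder_iff_pow_eq_one]
    refine ⟨n, hn, ?_⟩
    rw [hcomm.mul_pow]
    apply Units.ext
    show ((u ^ n : GL (Fin 2) K) : Matrix (Fin 2) (Fin 2) K)
        * ((A0 ^ n : GL (Fin 2) K) : Matrix (Fin 2) (Fin 2) K) = 1
    have huv : ((u ^ n : GL (Fin 2) K) : Matrix (Fin 2) (Fin 2) K) = μ ^ n • 1 := by
      rw [Units.val_pow_eq_pow_val]
      show (μ • (1:Matrix (Fin 2) (Fin 2) K)) ^ n = μ ^ n • 1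
      rw [_root_.smul_pow, one_pow]
    rw [huv, hlam, smul_mul_assoc, one_mul, smul_smul, hμ, inv_mul_cancel₀ hlam0, one_smul]
  · rw [QuotientGroup.mk_mul]
    have h1 : (QuotientGroup.mk u : GL (Fin 2) K ⧸ Subgroup.center (GL (Fin 2) K)) = 1 := by
      rw [QuotientGroup.eq_one_iff]
      exact (mem_center_GL2 _).mpr ⟨μ, hμ0, rfl⟩
    rw [h1, one_mul]

/-- The center of `GL(2,K)` is a closed subgroup. -/
theorem isClosed_center_GL2 :
    IsClosed ((Subgroup.center (GL (Fin 2) K) : Subgroup (GL (Fin 2) K)) :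
      Set (GL (Fin 2) K)) := by
  have hval : Continuous (fun A : GL (Fin 2) K => (A : Matrix (Fin 2) (Fin 2) K)) :=
    Units.continuous_val
  have hset : ((Subgroup.center (GL (Fin 2) K) : Subgroup (GL (Fin 2) K)) :
      Set (GL (Fin 2) K)) =
      {A : GL (Fin 2) K | (A : Matrix (Fin 2) (Fin 2) K) 0 1 = 0 ∧
        (A : Matrix (Fin 2) (Fin 2) K) 1 0 = 0 ∧
        (A : Matrix (Fin 2) (Fin 2) K) 0 0 = (A : Matrix (Fin 2) (Fin 2) K) 1 1} := by
    ext A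
    simp only [SetLike.mem_coe, Set.mem_setOf_eq, mem_center_GL2]
    constructor
    · rintro ⟨r, hr0, hr⟩
      refine ⟨?_, ?_, ?_⟩ <;>
        simp [hr, Matrix.smul_apply, Matrix.one_apply,
          Matrix.one_apply_ne (by decide : (0 : Fin 2) ≠ 1),
          Matrix.one_apply_ne (by decide : (1 : Fin 2) ≠ 0)]
    · rintro ⟨h01, h10, hdiag⟩
      refine ⟨(A : Matrix (Fin 2) (Fin 2) K) 0 0, ?_, ?_⟩
      · intro h0
        have hdet : IsUnit (A : Matrix (Fin 2) (Fin 2) K).det :=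
          (Matrix.isUnit_iff_isUnit_det _).mp A.isUnit
        rw [Matrix.det_fin_two, h01, ← hdiag, h0] at hdet
        simp at hdet
      · ext i j
        fin_cases i <;> fin_cases j <;>
          simp [Matrix.smul_apply, Matrix.one_apply, h01, h10, ← hdiag]
  rw [hset]
  have h1 : IsClosed {A : GL (Fin 2) K | (A : Matrix (Fin 2) (Fin 2) K) 0 1 = 0} :=
    isClosed_eq (hval.matrix_elem 0 1) continuous_const
  have h2 : IsClosed {A : GL (Fin 2) K | (A : Matrix (Fin 2) (Fin 2) K) 1 0 = 0} :=
    isClosed_eq (hval.matrix_elem 1 0) continuous_const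
  have h3 : IsClosed {A : GL (Fin 2) K |
      (A : Matrix (Fin 2) (Fin 2) K) 0 0 = (A : Matrix (Fin 2) (Fin 2) K) 1 1} :=
    isClosed_eq (hval.matrix_elem 0 0) (hval.matrix_elem 1 1)
  exact h1.inter (h2.inter h3)

section Combinatorial

variable {P : Type*} [Group P]

/-- Alternating words in the coproduct of two subgroups: `false` means the word starts with a
nontrivial letter from `G`, `true` that it starts with a nontrivial letter from `H`. -/
inductive Alt (G H : Subgroup P) : Bool → Monoid.Coprod ↥G ↥H → Prop
  | base_l (x : ↥G) (hx : x ≠ 1) : Alt G H false (Monoid.Coprod.inl x)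
  | base_r (x : ↥H) (hx : x ≠ 1) : Alt G H true (Monoid.Coprod.inr x)
  | cons_l (x : ↥G) (hx : x ≠ 1) (w : Monoid.Coprod ↥G ↥H) (hw : Alt G H true w) :
      Alt G H false (Monoid.Coprod.inl x * w)
  | cons_r (x : ↥H) (hx : x ≠ 1) (w : Monoid.Coprod ↥G ↥H) (hw : Alt G H false w) :
      Alt G H true (Monoid.Coprod.inr x * w)

theorem alt_decomp_l {G H : Subgroup P} {w : Monoid.Coprod ↥G ↥H} (h : Alt G H false w) :
    ∃ x : ↥G, x ≠ 1 ∧ (w = Monoid.Coprod.inl x ∨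
      ∃ w', Alt G H true w' ∧ w = Monoid.Coprod.inl x * w') := by
  cases h with
  | base_l x hx => exact ⟨x, hx, Or.inl rfl⟩
  | cons_l x hx w' hw' => exact ⟨x, hx, Or.inr ⟨w', hw', rfl⟩⟩

theorem alt_decomp_r {G H : Subgroup P} {w : Monoid.Coprod ↥G ↥H} (h : Alt G H true w) :
    ∃ x : ↥H, x ≠ 1 ∧ (w = Monoid.Coprod.inr x ∨
      ∃ w', Alt G H false w' ∧ w = Monoid.Coprod.inr x * w') := by
  cases h with
  | base_r x hx => exact ⟨x, hx, Or.inl rfl⟩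
  | cons_r x hx w' hw' => exact ⟨x, hx, Or.inr ⟨w', hw', rfl⟩⟩

/-- Every element of the coproduct is trivial or an alternating word. -/
theorem alt_or_one (G H : Subgroup P) (w : Monoid.Coprod ↥G ↥H) :
    w = 1 ∨ ∃ i, Alt G H i w := by
  set R : Monoid.Coprod ↥G ↥H → Prop := fun v => v = 1 ∨ ∃ i, Alt G H i v with hR
  have step_l : ∀ (x : ↥G) (v : Monoid.Coprod ↥G ↥H), R v → R (Monoid.Coprod.inl x * v) := by
    intro x v hv
    by_cases hx : x = 1
    · rw [hx, _root_.map_one, one_mul]; exact hv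
    rcases hv with rfl | ⟨i, hi⟩
    · rw [mul_one]; exact Or.inr ⟨false, Alt.base_l x hx⟩
    cases i with
    | true => exact Or.inr ⟨false, Alt.cons_l x hx _ hi⟩
    | false =>
        obtain ⟨y, hy, hcase⟩ := alt_decomp_l hi
        rcases hcase with rfl | ⟨w', hw', rfl⟩
        · rw [← _root_.map_mul]
          by_cases hxy : x * y = 1
          · rw [hxy, _root_.map_one]; exact Or.inl rfl
          · exact Or.inr ⟨false, Alt.base_l _ hxy⟩
        · rw [← mul_assoc, ← _root_.map_mul]
          by_cases hxy : x * y = 1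
          · rw [hxy, _root_.map_one, one_mul]; exact Or.inr ⟨true, hw'⟩
          · exact Or.inr ⟨false, Alt.cons_l _ hxy _ hw'⟩
  have step_r : ∀ (x : ↥H) (v : Monoid.Coprod ↥G ↥H), R v → R (Monoid.Coprod.inr x * v) := by
    intro x v hv
    by_cases hx : x = 1
    · rw [hx, _root_.map_one, one_mul]; exact hv
    rcases hv with rfl | ⟨i, hi⟩
    · rw [mul_one]; exact Or.inr ⟨true, Alt.base_r x hx⟩
    cases i with
    | false => exact Or.inr ⟨true, Alt.cons_r x hx _ hi⟩
    | true =>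
        obtain ⟨y, hy, hcase⟩ := alt_decomp_r hi
        rcases hcase with rfl | ⟨w', hw', rfl⟩
        · rw [← _root_.map_mul]
          by_cases hxy : x * y = 1
          · rw [hxy, _root_.map_one]; exact Or.inl rfl
          · exact Or.inr ⟨true, Alt.base_r _ hxy⟩
        · rw [← mul_assoc, ← _root_.map_mul]
          by_cases hxy : x * y = 1
          · rw [hxy, _root_.map_one, one_mul]; exact Or.inr ⟨false, hw'⟩
          · exact Or.inr ⟨true, Alt.cons_r _ hxy _ hw'⟩
  have main : ∀ w : Monoid.Coprod ↥G ↥H, ∀ v, R v → R (w * v) := by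
    intro w
    have hw : w ∈ Submonoid.closure
        (Set.range (Monoid.Coprod.inl : ↥G →* _) ∪ Set.range (Monoid.Coprod.inr : ↥H →* _)) := by
      rw [Monoid.Coprod.mclosure_range_inl_union_inr]
      trivial
    induction hw using Submonoid.closure_induction with
    | mem y hy =>
        rcases hy with ⟨x, rfl⟩ | ⟨x, rfl⟩
        · exact step_l x
        · exact step_r x
    | one => intro v hv; rw [one_mul]; exact hv
    | mul a b ha hb iha ihb =>
        intro v hv
        rw [mul_assoc]
        exact iha _ (ihb _ hv)
  have hfin := main w 1 (Or.inl rfl)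
  rwa [mul_one] at hfin

end Combinatorial

end Herrlich

set_option maxHeartbeats 1000000 in
open Herrlich in
/-- Herrlich's isometric circle criterion, Lemma 8.3, sufficiency:
let `K` be an algebraically closed field, complete with respect to a nontrivial
non-archimedean absolute value, and let `G`, `H` be finite subgroups of `PGL(2,K)`.
If for all nontrivial `γ ∈ G`, `δ ∈ H` the isometric circles
`Ī_γ = {z : |cz+d| ≤ 1}` (computed from any finite-order representative matrix
`(a b; c d) ∈ GL(2,K)` of `γ`; the circle does not depend on this choice) and `Ī_δ`
are disjoint, then the canonical homomorphism `G * H → PGL(2,K)` from the free product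
is injective with discrete image. -/
theorem isometric_circle_criterion {K : Type*} [NontriviallyNormedField K]
    [IsAlgClosed K] [CompleteSpace K]
    (hna : IsNonarchimedean (fun x : K => ‖x‖))
    (G H : Subgroup (ProjectiveGL2 K)) (hG : Finite G) (hH : Finite H)
    (hdisj : ∀ γ ∈ G, γ ≠ 1 → ∀ δ ∈ H, δ ≠ 1 →
      ∀ A B : GL (Fin 2) K, IsOfFinOrder A → IsOfFinOrder B →
        (QuotientGroup.mk A : ProjectiveGL2 K) = γ →
        (QuotientGroup.mk B : ProjectiveGL2 K) = δ →
        ∀ z : K, ¬ (‖(A : Matrix (Fin 2) (Fin 2) K) 1 0 * z +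
                      (A : Matrix (Fin 2) (Fin 2) K) 1 1‖ ≤ 1 ∧
                    ‖(B : Matrix (Fin 2) (Fin 2) K) 1 0 * z +
                      (B : Matrix (Fin 2) (Fin 2) K) 1 1‖ ≤ 1)) :
    Function.Injective (Monoid.Coprod.lift G.subtype H.subtype) ∧
      DiscreteTopology (Monoid.Coprod.lift G.subtype H.subtype).range := by
  classical
  haveI hclosedC : IsClosed ((Subgroup.center (GL (Fin 2) K)) : Set (GL (Fin 2) K)) :=
    Herrlich.isClosed_center_GL2
  haveI hT3 : T3Space (ProjectiveGL2 K) := inferInstance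
  by_cases hGbot : G = ⊥
  · -- `G` is trivial
    subst hGbot
    have hsur : ∀ w : Monoid.Coprod ↥(⊥ : Subgroup (ProjectiveGL2 K)) ↥H,
        ∃ u, Monoid.Coprod.inr u = w := by
      intro w
      have h1 : MonoidHom.mrange
            (Monoid.Coprod.inl : ↥(⊥ : Subgroup (ProjectiveGL2 K)) →* _) ≤
          MonoidHom.mrange (Monoid.Coprod.inr : ↥H →* _) := by
        rintro p ⟨x, rfl⟩
        have hx1 : x = 1 := Subtype.ext (Subgroup.mem_bot.mp x.2)
        rw [hx1, _root_.map_one]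
        exact ⟨1, _root_.map_one _⟩
      have h3 : w ∈ MonoidHom.mrange (Monoid.Coprod.inl :
            ↥(⊥ : Subgroup (ProjectiveGL2 K)) →* _) ⊔
          MonoidHom.mrange (Monoid.Coprod.inr : ↥H →* _) := by
        rw [Monoid.Coprod.mrange_inl_sup_mrange_inr]; trivial
      rw [sup_eq_right.mpr h1] at h3
      exact h3
    constructor
    · intro w w' hww
      obtain ⟨u, rfl⟩ := hsur w
      obtain ⟨u', rfl⟩ := hsur w'
      rw [Monoid.Coprod.lift_apply_inr, Monoid.Coprod.lift_apply_inr] at hww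
      rw [H.subtype_injective hww]
    · have hfin : Finite
          ↥(Monoid.Coprod.lift (⊥ : Subgroup (ProjectiveGL2 K)).subtype H.subtype).range := by
        have hsub : ((Monoid.Coprod.lift (⊥ : Subgroup (ProjectiveGL2 K)).subtype
            H.subtype).range : Set (ProjectiveGL2 K)) ⊆ (H : Set (ProjectiveGL2 K)) := by
          rintro p ⟨w, rfl⟩
          obtain ⟨u, rfl⟩ := hsur w
          rw [Monoid.Coprod.lift_apply_inr]
          exact u.2
        exact ((Set.toFinite (H : Set (ProjectiveGL2 K))).subset hsub).to_subtype
      exact Finite.instDiscreteTopology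
  by_cases hHbot : H = ⊥
  · -- `H` is trivial
    subst hHbot
    have hsur : ∀ w : Monoid.Coprod ↥G ↥(⊥ : Subgroup (ProjectiveGL2 K)),
        ∃ u, Monoid.Coprod.inl u = w := by
      intro w
      have h1 : MonoidHom.mrange
            (Monoid.Coprod.inr : ↥(⊥ : Subgroup (ProjectiveGL2 K)) →* _) ≤
          MonoidHom.mrange (Monoid.Coprod.inl : ↥G →* _) := by
        rintro p ⟨x, rfl⟩
        have hx1 : x = 1 := Subtype.ext (Subgroup.mem_bot.mp x.2)
        rw [hx1, _root_.map_one]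
        exact ⟨1, _root_.map_one _⟩
      have h3 : w ∈ MonoidHom.mrange (Monoid.Coprod.inl : ↥G →* _) ⊔
          MonoidHom.mrange (Monoid.Coprod.inr :
            ↥(⊥ : Subgroup (ProjectiveGL2 K)) →* _) := by
        rw [Monoid.Coprod.mrange_inl_sup_mrange_inr]; trivial
      rw [sup_eq_left.mpr h1] at h3
      exact h3
    constructor
    · intro w w' hww
      obtain ⟨u, rfl⟩ := hsur w
      obtain ⟨u', rfl⟩ := hsur w'
      rw [Monoid.Coprod.lift_apply_inl, Monoid.Coprod.lift_apply_inl] at hww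
      rw [G.subtype_injective hww]
    · have hfin : Finite
          ↥(Monoid.Coprod.lift G.subtype (⊥ : Subgroup (ProjectiveGL2 K)).subtype).range := by
        have hsub : ((Monoid.Coprod.lift G.subtype
            (⊥ : Subgroup (ProjectiveGL2 K)).subtype).range :
            Set (ProjectiveGL2 K)) ⊆ (G : Set (ProjectiveGL2 K)) := by
          rintro p ⟨w, rfl⟩
          obtain ⟨u, rfl⟩ := hsur w
          rw [Monoid.Coprod.lift_apply_inl]
          exact u.2
        exact ((Set.toFinite (G : Set (ProjectiveGL2 K))).subset hsub).to_subtype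
      exact Finite.instDiscreteTopology
  -- main case: both subgroups are nontrivial
  have hordG : ∀ γ : ↥G, IsOfFinOrder ((γ : ProjectiveGL2 K)) := fun γ =>
    G.subtype.isOfFinOrder (isOfFinOrder_of_finite γ)
  have hordH : ∀ δ : ↥H, IsOfFinOrder ((δ : ProjectiveGL2 K)) := fun δ =>
    H.subtype.isOfFinOrder (isOfFinOrder_of_finite δ)
  choose AG hAGord hAGmk using fun γ : ↥G =>
    Herrlich.exists_finOrder_rep (K := K) ↑γ (hordG γ)
  choose AH hAHord hAHmk using fun δ : ↥H =>
    Herrlich.exists_finOrder_rep (K := K) ↑δ (hordH δ)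
  set SG : Set K := ⋃ (γ : ↥G) (_ : (γ : ProjectiveGL2 K) ≠ 1),
    {z : K | ‖Herrlich.den ((AG γ : Matrix (Fin 2) (Fin 2) K)) z‖ ≤ 1} with hSG
  set SH : Set K := ⋃ (δ : ↥H) (_ : (δ : ProjectiveGL2 K) ≠ 1),
    {z : K | ‖Herrlich.den ((AH δ : Matrix (Fin 2) (Fin 2) K)) z‖ ≤ 1} with hSH
  have hmemSG : ∀ (γ : ↥G), (γ : ProjectiveGL2 K) ≠ 1 → ∀ z : K,
      ‖Herrlich.den ((AG γ : Matrix (Fin 2) (Fin 2) K)) z‖ ≤ 1 → z ∈ SG := by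
    intro γ h z hz
    rw [hSG]
    exact Set.mem_iUnion.mpr ⟨γ, Set.mem_iUnion.mpr ⟨h, hz⟩⟩
  have hmemSH : ∀ (δ : ↥H), (δ : ProjectiveGL2 K) ≠ 1 → ∀ z : K,
      ‖Herrlich.den ((AH δ : Matrix (Fin 2) (Fin 2) K)) z‖ ≤ 1 → z ∈ SH := by
    intro δ h z hz
    rw [hSH]
    exact Set.mem_iUnion.mpr ⟨δ, Set.mem_iUnion.mpr ⟨h, hz⟩⟩
  -- nonemptiness of isometric circles
  have hcircG : ∀ γ : ↥G, ∃ z : K, ‖Herrlich.den ((AG γ : Matrix (Fin 2) (Fin 2) K)) z‖ ≤ 1 := by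
    intro γ
    by_cases hc0 : (AG γ : Matrix (Fin 2) (Fin 2) K) 1 0 = 0
    · refine ⟨0, ?_⟩
      rw [Herrlich.den_def, hc0, zero_mul, zero_add]
      exact le_of_eq (Herrlich.c_zero_case _ (hAGord γ) hc0)
    · refine ⟨-((AG γ : Matrix (Fin 2) (Fin 2) K) 1 1) / (AG γ : Matrix (Fin 2) (Fin 2) K) 1 0, ?_⟩
      rw [Herrlich.den_def]
      rw [mul_div_assoc', mul_comm, mul_div_assoc, div_self hc0, mul_one, neg_add_cancel]
      simp
  have hcircH : ∀ δ : ↥H, ∃ z : K, ‖Herrlich.den ((AH δ : Matrix (Fin 2) (Fin 2) K)) z‖ ≤ 1 := by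
    intro δ
    by_cases hc0 : (AH δ : Matrix (Fin 2) (Fin 2) K) 1 0 = 0
    · refine ⟨0, ?_⟩
      rw [Herrlich.den_def, hc0, zero_mul, zero_add]
      exact le_of_eq (Herrlich.c_zero_case _ (hAHord δ) hc0)
    · refine ⟨-((AH δ : Matrix (Fin 2) (Fin 2) K) 1 1) / (AH δ : Matrix (Fin 2) (Fin 2) K) 1 0, ?_⟩
      rw [Herrlich.den_def]
      rw [mul_div_assoc', mul_comm, mul_div_assoc, div_self hc0, mul_one, neg_add_cancel]
      simp
  -- the lower-left entries of the chosen representatives are nonzero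
  have hcG : ∀ γ : ↥G, (γ : ProjectiveGL2 K) ≠ 1 →
      (AG γ : Matrix (Fin 2) (Fin 2) K) 1 0 ≠ 0 := by
    intro γ hγ hc
    obtain ⟨δ0, hδ0⟩ := Subgroup.ne_bot_iff_exists_ne_one.mp hHbot
    have hδ0P : (δ0 : ProjectiveGL2 K) ≠ 1 := by simpa using hδ0
    obtain ⟨z0, hz0⟩ := hcircH δ0
    refine hdisj ↑γ γ.2 hγ ↑δ0 δ0.2 hδ0P (AG γ) (AH δ0) (hAGord γ) (hAHord δ0)
      (hAGmk γ) (hAHmk δ0) z0 ⟨?_, hz0⟩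
    show ‖Herrlich.den ((AG γ : Matrix (Fin 2) (Fin 2) K)) z0‖ ≤ 1
    rw [Herrlich.den_def, hc, zero_mul, zero_add]
    exact le_of_eq (Herrlich.c_zero_case _ (hAGord γ) hc)
  have hcH : ∀ δ : ↥H, (δ : ProjectiveGL2 K) ≠ 1 →
      (AH δ : Matrix (Fin 2) (Fin 2) K) 1 0 ≠ 0 := by
    intro δ hδ hc
    obtain ⟨γ0, hγ0⟩ := Subgroup.ne_bot_iff_exists_ne_one.mp hGbot
    have hγ0P : (γ0 : ProjectiveGL2 K) ≠ 1 := by simpa using hγ0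
    obtain ⟨z0, hz0⟩ := hcircG γ0
    refine hdisj ↑γ0 γ0.2 hγ0P ↑δ δ.2 hδ (AG γ0) (AH δ) (hAGord γ0) (hAHord δ)
      (hAGmk γ0) (hAHmk δ) z0 ⟨hz0, ?_⟩
    show ‖Herrlich.den ((AH δ : Matrix (Fin 2) (Fin 2) K)) z0‖ ≤ 1
    rw [Herrlich.den_def, hc, zero_mul, zero_add]
    exact le_of_eq (Herrlich.c_zero_case _ (hAHord δ) hc)
  -- choose a basepoint z1 outside all isometric circles
  obtain ⟨RG, hRG⟩ : ∃ RG : ℝ, ∀ γ : ↥G,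
      (1 + ‖(AG γ : Matrix (Fin 2) (Fin 2) K) 1 1‖) /
        ‖(AG γ : Matrix (Fin 2) (Fin 2) K) 1 0‖ ≤ RG := by
    obtain ⟨R, hR⟩ := (Set.finite_range (fun γ : ↥G =>
      (1 + ‖(AG γ : Matrix (Fin 2) (Fin 2) K) 1 1‖) /
        ‖(AG γ : Matrix (Fin 2) (Fin 2) K) 1 0‖)).bddAbove
    exact ⟨R, fun γ => hR ⟨γ, rfl⟩⟩
  obtain ⟨RH, hRH⟩ : ∃ RH : ℝ, ∀ δ : ↥H,
      (1 + ‖(AH δ : Matrix (Fin 2) (Fin 2) K) 1 1‖) /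
        ‖(AH δ : Matrix (Fin 2) (Fin 2) K) 1 0‖ ≤ RH := by
    obtain ⟨R, hR⟩ := (Set.finite_range (fun δ : ↥H =>
      (1 + ‖(AH δ : Matrix (Fin 2) (Fin 2) K) 1 1‖) /
        ‖(AH δ : Matrix (Fin 2) (Fin 2) K) 1 0‖)).bddAbove
    exact ⟨R, fun δ => hR ⟨δ, rfl⟩⟩
  obtain ⟨z1, hz1big⟩ := NormedField.exists_lt_norm K (max RG RH)
  have hz1G : ∀ γ : ↥G, (γ : ProjectiveGL2 K) ≠ 1 →
      1 < ‖Herrlich.den ((AG γ : Matrix (Fin 2) (Fin 2) K)) z1‖ := by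
    intro γ hγ
    by_contra hle
    push_neg at hle
    have hc := hcG γ hγ
    have hcpos : 0 < ‖(AG γ : Matrix (Fin 2) (Fin 2) K) 1 0‖ := norm_pos_iff.mpr hc
    have h1 : ‖(AG γ : Matrix (Fin 2) (Fin 2) K) 1 0 * z1‖ ≤
        1 + ‖(AG γ : Matrix (Fin 2) (Fin 2) K) 1 1‖ := by
      have h2 : (AG γ : Matrix (Fin 2) (Fin 2) K) 1 0 * z1 =
          Herrlich.den ((AG γ : Matrix (Fin 2) (Fin 2) K)) z1 -
          (AG γ : Matrix (Fin 2) (Fin 2) K) 1 1 := by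
        rw [Herrlich.den_def]; ring
      rw [h2]
      calc ‖_ - _‖ ≤ ‖Herrlich.den ((AG γ : Matrix (Fin 2) (Fin 2) K)) z1‖ +
          ‖(AG γ : Matrix (Fin 2) (Fin 2) K) 1 1‖ := norm_sub_le _ _
      _ ≤ 1 + ‖(AG γ : Matrix (Fin 2) (Fin 2) K) 1 1‖ := by linarith
    rw [norm_mul] at h1
    have h3 : ‖z1‖ ≤ (1 + ‖(AG γ : Matrix (Fin 2) (Fin 2) K) 1 1‖) /
        ‖(AG γ : Matrix (Fin 2) (Fin 2) K) 1 0‖ := by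
      rw [le_div_iff₀ hcpos]
      linarith [h1]
    have := hRG γ
    have := le_max_left RG RH
    linarith
  have hz1H : ∀ δ : ↥H, (δ : ProjectiveGL2 K) ≠ 1 →
      1 < ‖Herrlich.den ((AH δ : Matrix (Fin 2) (Fin 2) K)) z1‖ := by
    intro δ hδ
    by_contra hle
    push_neg at hle
    have hc := hcH δ hδ
    have hcpos : 0 < ‖(AH δ : Matrix (Fin 2) (Fin 2) K) 1 0‖ := norm_pos_iff.mpr hc
    have h1 : ‖(AH δ : Matrix (Fin 2) (Fin 2) K) 1 0 * z1‖ ≤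
        1 + ‖(AH δ : Matrix (Fin 2) (Fin 2) K) 1 1‖ := by
      have h2 : (AH δ : Matrix (Fin 2) (Fin 2) K) 1 0 * z1 =
          Herrlich.den ((AH δ : Matrix (Fin 2) (Fin 2) K)) z1 -
          (AH δ : Matrix (Fin 2) (Fin 2) K) 1 1 := by
        rw [Herrlich.den_def]; ring
      rw [h2]
      calc ‖_ - _‖ ≤ ‖Herrlich.den ((AH δ : Matrix (Fin 2) (Fin 2) K)) z1‖ +
          ‖(AH δ : Matrix (Fin 2) (Fin 2) K) 1 1‖ := norm_sub_le _ _
      _ ≤ 1 + ‖(AH δ : Matrix (Fin 2) (Fin 2) K) 1 1‖ := by linarith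
    rw [norm_mul] at h1
    have h3 : ‖z1‖ ≤ (1 + ‖(AH δ : Matrix (Fin 2) (Fin 2) K) 1 1‖) /
        ‖(AH δ : Matrix (Fin 2) (Fin 2) K) 1 0‖ := by
      rw [le_div_iff₀ hcpos]
      linarith [h1]
    have := hRH δ
    have := le_max_right RG RH
    linarith
  have hz1SG : z1 ∉ SG := by
    intro h
    rw [hSG] at h
    obtain ⟨γ, h⟩ := Set.mem_iUnion.mp h
    obtain ⟨hγ, h⟩ := Set.mem_iUnion.mp h
    exact absurd h (not_le.mpr (hz1G γ hγ))
  have hz1SH : z1 ∉ SH := by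
    intro h
    rw [hSH] at h
    obtain ⟨δ, h⟩ := Set.mem_iUnion.mp h
    obtain ⟨hδ, h⟩ := Set.mem_iUnion.mp h
    exact absurd h (not_le.mpr (hz1H δ hδ))
  have hz1S : z1 ∉ SG ∪ SH := by
    intro h
    rcases h with h | h
    · exact hz1SG h
    · exact hz1SH h
  -- the disjointness hypothesis in dynamical form
  have hSH_G : ∀ γ : ↥G, (γ : ProjectiveGL2 K) ≠ 1 → ∀ z ∈ SH,
      1 < ‖Herrlich.den ((AG γ : Matrix (Fin 2) (Fin 2) K)) z‖ := by
    intro γ hγ z hz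
    rw [hSH] at hz
    obtain ⟨δ, hz⟩ := Set.mem_iUnion.mp hz
    obtain ⟨hδ, hz⟩ := Set.mem_iUnion.mp hz
    by_contra hle
    push_neg at hle
    exact hdisj ↑γ γ.2 hγ ↑δ δ.2 hδ (AG γ) (AH δ) (hAGord γ) (hAHord δ)
      (hAGmk γ) (hAHmk δ) z ⟨hle, hz⟩
  have hSG_H : ∀ δ : ↥H, (δ : ProjectiveGL2 K) ≠ 1 → ∀ z ∈ SG,
      1 < ‖Herrlich.den ((AH δ : Matrix (Fin 2) (Fin 2) K)) z‖ := by
    intro δ hδ z hz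
    rw [hSG] at hz
    obtain ⟨γ, hz⟩ := Set.mem_iUnion.mp hz
    obtain ⟨hγ, hz⟩ := Set.mem_iUnion.mp hz
    by_contra hle
    push_neg at hle
    exact hdisj ↑γ γ.2 hγ ↑δ δ.2 hδ (AG γ) (AH δ) (hAGord γ) (hAHord δ)
      (hAGmk γ) (hAHmk δ) z ⟨hz, hle⟩
  -- the orbit lemma, by induction on alternating words
  have horbit : ∀ (i : Bool) (w : Monoid.Coprod ↥G ↥H), Herrlich.Alt G H i w →
      ∃ A : GL (Fin 2) K,
        (QuotientGroup.mk A : ProjectiveGL2 K) = Monoid.Coprod.lift G.subtype H.subtype w ∧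
        Herrlich.den ((A : Matrix (Fin 2) (Fin 2) K)) z1 ≠ 0 ∧
        Herrlich.moeb ((A : Matrix (Fin 2) (Fin 2) K)) z1 ∈ (cond i SH SG) := by
    intro i w halt
    induction halt with
    | base_l x hx =>
        have hxP : (x : ProjectiveGL2 K) ≠ 1 := by simpa using hx
        have h1 := hz1G x hxP
        refine ⟨AG x, ?_, ?_, ?_⟩
        · rw [hAGmk x, Monoid.Coprod.lift_apply_inl]
          rfl
        · intro h0
          rw [h0] at h1
          simp at h1
          linarith
        · exact hmemSG x hxP _ (Herrlich.map_into hna (AG x) (hAGord x) z1 h1)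
    | base_r x hx =>
        have hxP : (x : ProjectiveGL2 K) ≠ 1 := by simpa using hx
        have h1 := hz1H x hxP
        refine ⟨AH x, ?_, ?_, ?_⟩
        · rw [hAHmk x, Monoid.Coprod.lift_apply_inr]
          rfl
        · intro h0
          rw [h0] at h1
          simp at h1
          linarith
        · exact hmemSH x hxP _ (Herrlich.map_into hna (AH x) (hAHord x) z1 h1)
    | cons_l x hx w' hw' ih =>
        obtain ⟨A', hA'mk, hA'den, hA'mem⟩ := ih
        have hxP : (x : ProjectiveGL2 K) ≠ 1 := by simpa using hx
        have h1 := hSH_G x hxP _ hA'mem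
        have hvalmul : ((AG x * A' : GL (Fin 2) K) : Matrix (Fin 2) (Fin 2) K) =
            (AG x : Matrix (Fin 2) (Fin 2) K) * (A' : Matrix (Fin 2) (Fin 2) K) :=
          Units.val_mul _ _
        refine ⟨AG x * A', ?_, ?_, ?_⟩
        · rw [QuotientGroup.mk_mul, hAGmk x, hA'mk, _root_.map_mul,
            Monoid.Coprod.lift_apply_inl]
          rfl
        · rw [hvalmul, Herrlich.den_mul _ _ _ hA'den]
          refine mul_ne_zero ?_ hA'den
          intro h0
          rw [h0] at h1
          simp at h1
          linarith
        · rw [hvalmul, Herrlich.moeb_mul _ _ _ hA'den]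
          exact hmemSG x hxP _ (Herrlich.map_into hna (AG x) (hAGord x) _ h1)
    | cons_r x hx w' hw' ih =>
        obtain ⟨A', hA'mk, hA'den, hA'mem⟩ := ih
        have hxP : (x : ProjectiveGL2 K) ≠ 1 := by simpa using hx
        have h1 := hSG_H x hxP _ hA'mem
        have hvalmul : ((AH x * A' : GL (Fin 2) K) : Matrix (Fin 2) (Fin 2) K) =
            (AH x : Matrix (Fin 2) (Fin 2) K) * (A' : Matrix (Fin 2) (Fin 2) K) :=
          Units.val_mul _ _
        refine ⟨AH x * A', ?_, ?_, ?_⟩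
        · rw [QuotientGroup.mk_mul, hAHmk x, hA'mk, _root_.map_mul,
            Monoid.Coprod.lift_apply_inr]
          rfl
        · rw [hvalmul, Herrlich.den_mul _ _ _ hA'den]
          refine mul_ne_zero ?_ hA'den
          intro h0
          rw [h0] at h1
          simp at h1
          linarith
        · rw [hvalmul, Herrlich.moeb_mul _ _ _ hA'den]
          exact hmemSH x hxP _ (Herrlich.map_into hna (AH x) (hAHord x) _ h1)
  -- injectivity
  have hinj : Function.Injective (Monoid.Coprod.lift G.subtype H.subtype) := by
    rw [injective_iff_map_eq_one]
    intro w hw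
    rcases Herrlich.alt_or_one G H w with h1 | ⟨i, halt⟩
    · exact h1
    exfalso
    obtain ⟨A, hAmk, hAden, hAmem⟩ := horbit i w halt
    rw [hw] at hAmk
    obtain ⟨r, hr0, hr⟩ := (Herrlich.mem_center_GL2 A).mp ((QuotientGroup.eq_one_iff A).mp hAmk)
    rw [hr, Herrlich.moeb_scalar r hr0] at hAmem
    cases i with
    | false => exact hz1SG hAmem
    | true => exact hz1SH hAmem
  refine ⟨hinj, ?_⟩
  -- discreteness
  have hval : Continuous (fun A : GL (Fin 2) K => (A : Matrix (Fin 2) (Fin 2) K)) :=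
    Units.continuous_val
  have hcden : Continuous (fun A : GL (Fin 2) K =>
      Herrlich.den ((A : Matrix (Fin 2) (Fin 2) K)) z1) := by
    show Continuous fun A : GL (Fin 2) K =>
      (A : Matrix (Fin 2) (Fin 2) K) 1 0 * z1 + (A : Matrix (Fin 2) (Fin 2) K) 1 1
    exact ((hval.matrix_elem 1 0).mul continuous_const).add (hval.matrix_elem 1 1)
  have hcnum : Continuous (fun A : GL (Fin 2) K =>
      (A : Matrix (Fin 2) (Fin 2) K) 0 0 * z1 + (A : Matrix (Fin 2) (Fin 2) K) 0 1) :=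
    ((hval.matrix_elem 0 0).mul continuous_const).add (hval.matrix_elem 0 1)
  -- SG ∪ SH is closed
  have hSclosed : IsClosed (SG ∪ SH) := by
    have hG' : IsClosed SG := by
      rw [hSG]
      apply isClosed_iUnion_of_finite
      intro γ
      apply isClosed_iUnion_of_finite
      intro _
      exact isClosed_le (by
        apply Continuous.norm
        exact (continuous_const.mul continuous_id).add continuous_const) continuous_const
    have hH' : IsClosed SH := by
      rw [hSH]
      apply isClosed_iUnion_of_finite
      intro δ
      apply isClosed_iUnion_of_finite
      intro _
      exact isClosed_le (by
        apply Continuous.norm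
        exact (continuous_const.mul continuous_id).add continuous_const) continuous_const
    exact hG'.union hH'
  obtain ⟨ε, hε, hball⟩ := Metric.isOpen_iff.mp hSclosed.isOpen_compl z1 hz1S
  set U' : Set (GL (Fin 2) K) := {A : GL (Fin 2) K |
    Herrlich.den ((A : Matrix (Fin 2) (Fin 2) K)) z1 ≠ 0 ∧
    Herrlich.moeb ((A : Matrix (Fin 2) (Fin 2) K)) z1 ∈ Metric.ball z1 ε} with hU'
  have hU'open : IsOpen U' := by
    have h1 : IsOpen {A : GL (Fin 2) K |
        Herrlich.den ((A : Matrix (Fin 2) (Fin 2) K)) z1 ≠ 0} := by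
      have : {A : GL (Fin 2) K | Herrlich.den ((A : Matrix (Fin 2) (Fin 2) K)) z1 ≠ 0} =
          (fun A : GL (Fin 2) K => Herrlich.den ((A : Matrix (Fin 2) (Fin 2) K)) z1) ⁻¹'
            ({0}ᶜ) := rfl
      rw [this]
      exact isOpen_compl_singleton.preimage hcden
    have h2 : ContinuousOn (fun A : GL (Fin 2) K =>
        Herrlich.moeb ((A : Matrix (Fin 2) (Fin 2) K)) z1)
        {A : GL (Fin 2) K | Herrlich.den ((A : Matrix (Fin 2) (Fin 2) K)) z1 ≠ 0} := by
      apply ContinuousOn.div hcnum.continuousOn hcden.continuousOn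
      intro x hx
      exact hx
    have h3 := h2.isOpen_inter_preimage (t := Metric.ball z1 ε) h1 Metric.isOpen_ball
    have h4 : U' = {A : GL (Fin 2) K |
        Herrlich.den ((A : Matrix (Fin 2) (Fin 2) K)) z1 ≠ 0} ∩
        (fun A : GL (Fin 2) K => Herrlich.moeb ((A : Matrix (Fin 2) (Fin 2) K)) z1) ⁻¹'
          Metric.ball z1 ε := rfl
    rw [h4]
    exact h3
  have hUopen : IsOpen ((QuotientGroup.mk '' U') : Set (ProjectiveGL2 K)) :=
    QuotientGroup.isOpenMap_coe U' hU'open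
  have hone : ∀ w : Monoid.Coprod ↥G ↥H,
      Monoid.Coprod.lift G.subtype H.subtype w ∈ (QuotientGroup.mk '' U' :
        Set (ProjectiveGL2 K)) →
      Monoid.Coprod.lift G.subtype H.subtype w = 1 := by
    intro w hw
    rcases Herrlich.alt_or_one G H w with h1 | ⟨i, halt⟩
    · rw [h1, _root_.map_one]
    exfalso
    obtain ⟨A', hA'U, hA'mk⟩ := hw
    obtain ⟨A, hAmk, hAden, hAmem⟩ := horbit i w halt
    have hrel : A'⁻¹ * A ∈ Subgroup.center (GL (Fin 2) K) := by
      rw [← QuotientGroup.eq_one_iff, QuotientGroup.mk_mul]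
      have hAA : (QuotientGroup.mk A' : ProjectiveGL2 K) = QuotientGroup.mk A :=
        hA'mk.trans hAmk.symm
      rw [← hAA, ← QuotientGroup.mk_mul, inv_mul_cancel]
      rfl
    obtain ⟨r, hr0, hr⟩ := (Herrlich.mem_center_GL2 _).mp hrel
    have hAval : (A : Matrix (Fin 2) (Fin 2) K) = r • (A' : Matrix (Fin 2) (Fin 2) K) := by
      have h5 : (A : Matrix (Fin 2) (Fin 2) K) = (A' : Matrix (Fin 2) (Fin 2) K) *
          ((A'⁻¹ * A : GL (Fin 2) K) : Matrix (Fin 2) (Fin 2) K) := by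
        rw [← Units.val_mul, mul_inv_cancel_left]
      rw [h5, hr, mul_smul_comm, mul_one]
    have h6 : Herrlich.moeb ((A : Matrix (Fin 2) (Fin 2) K)) z1 =
        Herrlich.moeb ((A' : Matrix (Fin 2) (Fin 2) K)) z1 := by
      rw [hAval, Herrlich.moeb_smul r hr0]
    have h7 := hA'U.2
    rw [← h6] at h7
    have h8 := hball h7
    apply h8
    cases i with
    | false => exact Or.inl hAmem
    | true => exact Or.inr hAmem
  apply discreteTopology_of_isOpen_singleton_one
  have hpre : ((Subtype.val : ↥(Monoid.Coprod.lift G.subtype H.subtype).range →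
        ProjectiveGL2 K) ⁻¹' (QuotientGroup.mk '' U')) = {1} := by
    ext p
    simp only [Set.mem_preimage, Set.mem_singleton_iff]
    constructor
    · intro hp
      obtain ⟨w, hw⟩ := MonoidHom.mem_range.mp p.2
      have h9 := hone w (by rw [hw]; exact hp)
      exact Subtype.ext (by rw [← hw, h9]; rfl)
    · rintro rfl
      refine ⟨1, ⟨?_, ?_⟩, ?_⟩
      · show Herrlich.den (((1 : GL (Fin 2) K) : Matrix (Fin 2) (Fin 2) K)) z1 ≠ 0
        rw [Units.val_one]
        have h10 : Herrlich.den ((1 : Matrix (Fin 2) (Fin 2) K)) z1 = 1 := by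
          rw [Herrlich.den_def, Matrix.one_apply_ne (by decide : (1 : Fin 2) ≠ 0),
            Matrix.one_apply_eq, zero_mul, zero_add]
        rw [h10]
        exact one_ne_zero
      · show Herrlich.moeb (((1 : GL (Fin 2) K) : Matrix (Fin 2) (Fin 2) K)) z1 ∈
          Metric.ball z1 ε
        rw [Units.val_one]
        have h11 := Herrlich.moeb_scalar (1 : K) one_ne_zero z1
        rw [one_smul] at h11
        rw [h11]
        exact Metric.mem_ball_self hε
      · rfl
  rw [← hpre]
  exact hUopen.preimage continuous_subtype_val
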